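/- For the star-shaped Cattani-Sassone transition system M_0 = P(uv) ⊔ P(u) (base state 0, branches 0 →^{u₁} a →^{v₁} b and 0 →^{u₂} c with μ(u₁)=μ(u₂)=u, μ(v₁)=v, u ≠ v), the codiagonal morphism M_0 ⊔_0 M_0 → M_0 (from the wedge of two copies of M_0 at the base state) is P-injective: every commutative square whose left map is a path extension (P(w),0) → (P(ww'),0) and whose bottom map lands in M_0 admits a lift into M_0 ⊔_0 M_0. -/

import Mathlib

/-- A weak transition system over a set of labels `Λ`:
states, labelled actions, and nonempty lists of actions as transitions,
satisfying the multiset axiom and the patching axiom. -/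
structure WTS (Λ : Type) where
  State : Type
  Act : Type
  lab : Act → Λ
  Tr : State → List Act → State → Prop
  tr_ne : ∀ {α l β}, Tr α l β → l ≠ []
  multiset : ∀ {α β : State} {l l' : List Act}, Tr α l β → List.Perm l l' → Tr α l' β
  patching : ∀ {α β ν₁ ν₂ : State} {l₁ l₂ l₃ : List Act},
      l₁ ≠ [] → l₂ ≠ [] → l₃ ≠ [] →
      Tr α (l₁ ++ l₂ ++ l₃) β →
      Tr α l₁ ν₁ → Tr ν₁ (l₂ ++ l₃) β →
      Tr α (l₁ ++ l₂) ν₂ → Tr ν₂ l₃ β →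
      Tr ν₁ l₂ ν₂

/-- A morphism of weak transition systems. -/
structure WTSHom {Λ : Type} (X Y : WTS Λ) where
  onState : X.State → Y.State
  onAct : X.Act → Y.Act
  lab_eq : ∀ a, Y.lab (onAct a) = X.lab a
  map_tr : ∀ {α l β}, X.Tr α l β → Y.Tr (onState α) (l.map onAct) (onState β)

def WTSHom.comp {Λ : Type} {X Y Z : WTS Λ} (g : WTSHom Y Z) (f : WTSHom X Y) :
    WTSHom X Z where
  onState := g.onState ∘ f.onState
  onAct := g.onAct ∘ f.onAct
  lab_eq := fun a => by simp [g.lab_eq, f.lab_eq]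
  map_tr := fun h => by
    have := g.map_tr (f.map_tr h)
    simpa [List.map_map, Function.comp] using this

def WTSHom.id' {Λ : Type} (X : WTS Λ) : WTSHom X X where
  onState := id
  onAct := id
  lab_eq := fun _ => rfl
  map_tr := fun h => by simpa using h

/-- Every action is used by a 1-transition. -/
def AllUsed {Λ : Type} (X : WTS Λ) : Prop := ∀ a, ∃ α β, X.Tr α [a] β

/-- Intermediate state axiom. -/
def InterState {Λ : Type} (X : WTS Λ) : Prop :=
  ∀ {α β : X.State} (l₁ l₂ : List X.Act), l₁ ≠ [] → l₂ ≠ [] →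
    X.Tr α (l₁ ++ l₂) β → ∃ ν, X.Tr α l₁ ν ∧ X.Tr ν l₂ β

def IsCubical {Λ : Type} (X : WTS Λ) : Prop := AllUsed X ∧ InterState X

/-- CSA1. -/
def CSA1 {Λ : Type} (X : WTS Λ) : Prop :=
  ∀ {α β : X.State} (u v : X.Act),
    X.Tr α [u] β → X.Tr α [v] β → X.lab u = X.lab v → u = v

/-- CSA2 : unique intermediate state axiom. -/
def CSA2 {Λ : Type} (X : WTS Λ) : Prop :=
  ∀ {α β : X.State} (l₁ l₂ : List X.Act), l₁ ≠ [] → l₂ ≠ [] →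
    X.Tr α (l₁ ++ l₂) β → ∃! ν, X.Tr α l₁ ν ∧ X.Tr ν l₂ β

def IsRegularTS {Λ : Type} (X : WTS Λ) : Prop := IsCubical X ∧ CSA2 X

/-- Cattani-Sassone transition system. -/
def IsCSTS {Λ : Type} (X : WTS Λ) : Prop := IsCubical X ∧ CSA1 X ∧ CSA2 X

/-- Internal state. -/
def Internal {Λ : Type} (X : WTS Λ) (α : X.State) : Prop :=
  ∃ (γ δ : X.State) (l₁ l₂ : List X.Act),
    l₁ ≠ [] ∧ l₂ ≠ [] ∧ X.Tr γ (l₁ ++ l₂) δ ∧ X.Tr γ l₁ α ∧ X.Tr α l₂ δ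

/-- Reachability via a finite sequence of 1-transitions. -/
def Reachable {Λ : Type} (X : WTS Λ) (base α : X.State) : Prop :=
  ∃ (n : ℕ) (s : Fin (n + 1) → X.State) (u : Fin n → X.Act),
    s 0 = base ∧ s (Fin.last n) = α ∧
    ∀ i : Fin n, X.Tr (s i.castSucc) [u i] (s i.succ)

/-- Star-shaped pointed transition system. -/
def StarShaped {Λ : Type} (X : WTS Λ) (base : X.State) : Prop :=
  ∀ α, Reachable X base α

/-- Past-similarity, concrete description: a `double path' from `(*,*)` to `(α,β)`
all of whose coordinate-mixed steps are 1-transitions with common actions. -/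
def PastSim4 {Λ : Type} (X : WTS Λ) (base α β : X.State) : Prop :=
  ∃ (n : ℕ) (s t : Fin (n + 1) → X.State) (u : Fin n → X.Act),
    s 0 = base ∧ t 0 = base ∧ s (Fin.last n) = α ∧ t (Fin.last n) = β ∧
    ∀ i : Fin n,
      X.Tr (s i.castSucc) [u i] (s i.succ) ∧ X.Tr (s i.castSucc) [u i] (t i.succ) ∧
      X.Tr (t i.castSucc) [u i] (s i.succ) ∧ X.Tr (t i.castSucc) [u i] (t i.succ)

/-- The path `P(w)` indexed by the word `w` : the linear Cattani-Sassone transition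
system with states `0,…,n` and 1-transitions `(i-1,(xᵢ,i),i)`. -/
def Pw {Λ : Type} (w : List Λ) : WTS Λ where
  State := Fin (w.length + 1)
  Act := Fin w.length
  lab := fun i => w.get i
  Tr := fun α l β => ∃ i : Fin w.length, α = i.castSucc ∧ β = i.succ ∧ l = [i]
  tr_ne := by rintro α l β ⟨i, -, -, rfl⟩; simp
  multiset := by
    rintro α β l l' ⟨i, h1, h2, rfl⟩ hp
    exact ⟨i, h1, h2, List.perm_singleton.mp hp.symm⟩
  patching := by
    rintro α β ν₁ ν₂ l₁ l₂ l₃ h1 h2 h3 ⟨i, -, -, h⟩ - - - -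
    exfalso
    have e1 := List.length_pos_iff.mpr h1
    have e2 := List.length_pos_iff.mpr h2
    have e3 := List.length_pos_iff.mpr h3
    have := congrArg List.length h
    simp [List.length_append] at this
    omega

/-- The extension-of-paths map `(P(w),0) → (P(ww'),0)`. -/
def pathExt {Λ : Type} (w w' : List Λ) : WTSHom (Pw w) (Pw (w ++ w')) where
  onState := fun i => Fin.castLE (by simp [List.length_append]) i
  onAct := fun i => Fin.castLE (by simp [List.length_append]) i
  lab_eq := fun a => by
    show (w ++ w').get (Fin.castLE (by simp [List.length_append]) a) = w.get a
    exact List.getElem_append_left a.isLt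
  map_tr := by
    rintro α l β ⟨i, rfl, rfl, rfl⟩
    exact ⟨Fin.castLE (by simp [List.length_append]) i,
      by ext; simp, by ext; simp, rfl⟩

/-- `P`-injectivity of a pointed morphism `h : (Z,z) → (Y,y)` : the right lifting
property with respect to all path extensions `(P(w),0) → (P(ww'),0)`. -/
def PInj {Λ : Type} {Z Y : WTS Λ} (h : WTSHom Z Y) (z : Z.State) (yb : Y.State) :
    Prop :=
  ∀ (w w' : List Λ) (a : WTSHom (Pw w) Z) (b : WTSHom (Pw (w ++ w')) Y),
    a.onState (0 : Fin (w.length + 1)) = z →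
    b.onState (0 : Fin ((w ++ w').length + 1)) = yb →
    h.comp a = b.comp (pathExt w w') →
    ∃ ℓ : WTSHom (Pw (w ++ w')) Z, ℓ.comp (pathExt w w') = a ∧ h.comp ℓ = b

/-- `M₀ = P(uv) ⊔ P(u)` : base state `inl ()`, branch states `inr 0`, `inr 1`,
`inr 2`, actions `u₁ = 0`, `v₁ = 1`, `u₂ = 2` with labels `x`, `y`, `x`, and
1-transitions `(0,u₁,a)`, `(a,v₁,b)`, `(0,u₂,c)`. -/
def M0def {Λ : Type} (x y : Λ) : WTS Λ where
  State := Sum Unit (Fin 3)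
  Act := Fin 3
  lab := fun i => if i = 1 then y else x
  Tr := fun s l t =>
    (s = Sum.inl () ∧ l = [0] ∧ t = Sum.inr 0) ∨
    (s = Sum.inr 0 ∧ l = [1] ∧ t = Sum.inr 1) ∨
    (s = Sum.inl () ∧ l = [2] ∧ t = Sum.inr 2)
  tr_ne := by rintro α l β (⟨-, rfl, -⟩ | ⟨-, rfl, -⟩ | ⟨-, rfl, -⟩) <;> simp
  multiset := by
    rintro α β l l' (⟨h1, rfl, h2⟩ | ⟨h1, rfl, h2⟩ | ⟨h1, rfl, h2⟩) hp
    · exact Or.inl ⟨h1, List.perm_singleton.mp hp.symm, h2⟩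
    · exact Or.inr (Or.inl ⟨h1, List.perm_singleton.mp hp.symm, h2⟩)
    · exact Or.inr (Or.inr ⟨h1, List.perm_singleton.mp hp.symm, h2⟩)
  patching := by
    rintro α β ν₁ ν₂ l₁ l₂ l₃ h1 h2 h3 (⟨-, h, -⟩ | ⟨-, h, -⟩ | ⟨-, h, -⟩) - - - - <;>
    · exfalso
      have e1 := List.length_pos_iff.mpr h1
      have e2 := List.length_pos_iff.mpr h2
      have e3 := List.length_pos_iff.mpr h3
      have := congrArg List.length h
      simp [List.length_append] at this
      omega

/-- `M₁ = P(uv)` : states `0,1,2`, actions `0` labelled `x` and `1` labelled `y`,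
1-transitions `(0,0,1)` and `(1,1,2)`. -/
def M1def {Λ : Type} (x y : Λ) : WTS Λ where
  State := Fin 3
  Act := Fin 2
  lab := fun i => if i = 1 then y else x
  Tr := fun s l t =>
    (s = 0 ∧ l = [0] ∧ t = 1) ∨ (s = 1 ∧ l = [1] ∧ t = 2)
  tr_ne := by rintro α l β (⟨-, rfl, -⟩ | ⟨-, rfl, -⟩) <;> simp
  multiset := by
    rintro α β l l' (⟨h1, rfl, h2⟩ | ⟨h1, rfl, h2⟩) hp
    · exact Or.inl ⟨h1, List.perm_singleton.mp hp.symm, h2⟩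
    · exact Or.inr ⟨h1, List.perm_singleton.mp hp.symm, h2⟩
  patching := by
    rintro α β ν₁ ν₂ l₁ l₂ l₃ h1 h2 h3 (⟨-, h, -⟩ | ⟨-, h, -⟩) - - - - <;>
    · exfalso
      have e1 := List.length_pos_iff.mpr h1
      have e2 := List.length_pos_iff.mpr h2
      have e3 := List.length_pos_iff.mpr h3
      have := congrArg List.length h
      simp [List.length_append] at this
      omega

/-- The wedge `M₀ ⊔_0 M₀` : two copies of `M₀` glued at the base state. -/
def Wdg {Λ : Type} (x y : Λ) : WTS Λ where
  State := Sum Unit (Bool × Fin 3)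
  Act := Bool × Fin 3
  lab := fun a => if a.2 = 1 then y else x
  Tr := fun s l t => ∃ c : Bool,
    (s = Sum.inl () ∧ l = [(c, 0)] ∧ t = Sum.inr (c, 0)) ∨
    (s = Sum.inr (c, 0) ∧ l = [(c, 1)] ∧ t = Sum.inr (c, 1)) ∨
    (s = Sum.inl () ∧ l = [(c, 2)] ∧ t = Sum.inr (c, 2))
  tr_ne := by
    rintro α l β ⟨c, (⟨-, rfl, -⟩ | ⟨-, rfl, -⟩ | ⟨-, rfl, -⟩)⟩ <;> simp
  multiset := by
    rintro α β l l' ⟨c, (⟨h1, rfl, h2⟩ | ⟨h1, rfl, h2⟩ | ⟨h1, rfl, h2⟩)⟩ hp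
    · exact ⟨c, Or.inl ⟨h1, List.perm_singleton.mp hp.symm, h2⟩⟩
    · exact ⟨c, Or.inr (Or.inl ⟨h1, List.perm_singleton.mp hp.symm, h2⟩)⟩
    · exact ⟨c, Or.inr (Or.inr ⟨h1, List.perm_singleton.mp hp.symm, h2⟩)⟩
  patching := by
    rintro α β ν₁ ν₂ l₁ l₂ l₃ h1 h2 h3 ⟨c, (⟨-, h, -⟩ | ⟨-, h, -⟩ | ⟨-, h, -⟩)⟩ - - - - <;>
    · exfalso
      have e1 := List.length_pos_iff.mpr h1
      have e2 := List.length_pos_iff.mpr h2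
      have e3 := List.length_pos_iff.mpr h3
      have := congrArg List.length h
      simp [List.length_append] at this
      omega

/-- The codiagonal `M₀ ⊔_0 M₀ → M₀`. -/
def codiag {Λ : Type} (x y : Λ) : WTSHom (Wdg x y) (M0def x y) where
  onState := fun s => match s with
    | Sum.inl _ => Sum.inl ()
    | Sum.inr (_, i) => Sum.inr i
  onAct := fun a => a.2
  lab_eq := fun _ => rfl
  map_tr := by
    rintro α l β ⟨c, (⟨rfl, rfl, rfl⟩ | ⟨rfl, rfl, rfl⟩ | ⟨rfl, rfl, rfl⟩)⟩
    · exact Or.inl ⟨rfl, rfl, rfl⟩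
    · exact Or.inr (Or.inl ⟨rfl, rfl, rfl⟩)
    · exact Or.inr (Or.inr ⟨rfl, rfl, rfl⟩)

theorem WTSHom.ext' {Λ : Type} {X Y : WTS Λ} {f g : WTSHom X Y}
    (h1 : f.onState = g.onState) (h2 : f.onAct = g.onAct) : f = g := by
  cases f; cases g; cases h1; cases h2; rfl

/-- the codiagonal morphism `M₀ ⊔_0 M₀ → M₀` is `P`-injective: it has
the right lifting property with respect to every path extension
`(P(w),0) → (P(ww'),0)`. -/
theorem stmt_19 {Λ : Type} [Infinite Λ] (x y : Λ) (hxy : x ≠ y) :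
    PInj (codiag x y) ((Sum.inl () : Sum Unit (Bool × Fin 3)) : (Wdg x y).State)
      ((Sum.inl () : Sum Unit (Fin 3)) : (M0def x y).State) := by
  intro w w' a b ha hb hcomm
  have hS : ∀ j, (codiag x y).onState (a.onState j) =
      b.onState ((pathExt w w').onState j) :=
    fun j => congrFun (congrArg WTSHom.onState hcomm) j
  have hA : ∀ k, (codiag x y).onAct (a.onAct k) =
      b.onAct ((pathExt w w').onAct k) :=
    fun k => congrFun (congrArg WTSHom.onAct hcomm) k
  -- the copy of M₀ that `a` lands in
  set c : Bool := if h : 0 < w.length then (a.onAct ⟨0, h⟩).1 else true with hc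
  -- key invariant along the path `a`
  have key : ∀ k : ℕ, ∀ hk : k < w.length,
      (a.onAct ⟨k, hk⟩).1 = c ∧
      a.onState ⟨k + 1, by omega⟩ = Sum.inr (c, (a.onAct ⟨k, hk⟩).2) := by
    intro k
    induction k with
    | zero =>
      intro hk
      have htr := a.map_tr (show (Pw w).Tr (Fin.castSucc ⟨0, hk⟩) [⟨0, hk⟩]
        (Fin.succ ⟨0, hk⟩) from ⟨⟨0, hk⟩, rfl, rfl, rfl⟩)
      have h0 : a.onState (Fin.castSucc ⟨0, hk⟩) = Sum.inl () := by
        have : Fin.castSucc (⟨0, hk⟩ : Fin w.length) = (0 : Fin (w.length + 1)) := by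
          ext; simp
        rw [this, ha]
      rcases htr with ⟨c'', (⟨h1, h2, h3⟩ | ⟨h1, h2, h3⟩ | ⟨h1, h2, h3⟩)⟩
      · replace h2 := List.cons.inj h2
        have hact : a.onAct ⟨0, hk⟩ = (c'', 0) := h2.1
        have hcc : c = c'' := by rw [hc, dif_pos hk, hact]
        refine ⟨by rw [hact, hcc], ?_⟩
        have : Fin.succ (⟨0, hk⟩ : Fin w.length) = ⟨0 + 1, by omega⟩ := rfl
        rw [← this, h3, hact, hcc]
      · rw [h0] at h1; exact absurd h1 (by simp)
      · replace h2 := List.cons.inj h2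
        have hact : a.onAct ⟨0, hk⟩ = (c'', 2) := h2.1
        have hcc : c = c'' := by rw [hc, dif_pos hk, hact]
        refine ⟨by rw [hact, hcc], ?_⟩
        have : Fin.succ (⟨0, hk⟩ : Fin w.length) = ⟨0 + 1, by omega⟩ := rfl
        rw [← this, h3, hact, hcc]
    | succ k ih =>
      intro hk
      have hk' : k < w.length := by omega
      obtain ⟨-, hst⟩ := ih hk'
      have htr := a.map_tr (show (Pw w).Tr (Fin.castSucc ⟨k + 1, hk⟩) [⟨k + 1, hk⟩]
        (Fin.succ ⟨k + 1, hk⟩) from ⟨⟨k + 1, hk⟩, rfl, rfl, rfl⟩)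
      have hcs : Fin.castSucc (⟨k + 1, hk⟩ : Fin w.length) =
          (⟨k + 1, by omega⟩ : Fin (w.length + 1)) := rfl
      rw [hcs, hst] at htr
      rcases htr with ⟨c'', (⟨h1, h2, h3⟩ | ⟨h1, h2, h3⟩ | ⟨h1, h2, h3⟩)⟩
      · exact absurd h1 (by simp)
      · replace h2 := List.cons.inj h2
        have hact : a.onAct ⟨k + 1, hk⟩ = (c'', 1) := h2.1
        have hcc : c'' = c := by
          have := Sum.inr.inj h1
          exact (congrArg Prod.fst this).symm
        refine ⟨by rw [hact, hcc], ?_⟩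
        have : Fin.succ (⟨k + 1, hk⟩ : Fin w.length) = ⟨k + 1 + 1, by omega⟩ := rfl
        rw [← this, h3, hact, hcc]
      · exact absurd h1 (by simp)
  have hact : ∀ k : Fin w.length, (a.onAct k).1 = c := by
    intro k
    have := (key k.1 k.2).1
    simpa using this
  have hstate : ∀ j : Fin (w.length + 1),
      a.onState j = Sum.inl () ∨ ∃ i, a.onState j = Sum.inr (c, i) := by
    rintro ⟨j, hj⟩
    cases j with
    | zero =>
      left
      have : (⟨0, hj⟩ : Fin (w.length + 1)) = 0 := by ext; simp
      rw [this, ha]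
    | succ m =>
      right
      exact ⟨_, (key m (by omega)).2⟩
  -- the lift
  refine ⟨{ onState := fun j => Sum.elim (fun _ => Sum.inl ())
              (fun i => Sum.inr (c, i)) (b.onState j)
            onAct := fun k => (c, b.onAct k)
            lab_eq := fun k => b.lab_eq k
            map_tr := ?_ }, ?_, ?_⟩
  · rintro α l β ⟨i, rfl, rfl, rfl⟩
    have htr := b.map_tr (show (Pw (w ++ w')).Tr (Fin.castSucc i) [i]
      (Fin.succ i) from ⟨i, rfl, rfl, rfl⟩)
    rcases htr with ⟨h1, h2, h3⟩ | ⟨h1, h2, h3⟩ | ⟨h1, h2, h3⟩ <;>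
      replace h2 := List.cons.inj h2
    · exact ⟨c, Or.inl ⟨by rw [h1]; rfl, by exact congrArg (fun t => [(c, t)]) h2.1, by rw [h3]; rfl⟩⟩
    · exact ⟨c, Or.inr (Or.inl ⟨by rw [h1]; rfl, by exact congrArg (fun t => [(c, t)]) h2.1, by rw [h3]; rfl⟩)⟩
    · exact ⟨c, Or.inr (Or.inr ⟨by rw [h1]; rfl, by exact congrArg (fun t => [(c, t)]) h2.1, by rw [h3]; rfl⟩)⟩
  · refine WTSHom.ext' (funext fun j => ?_) (funext fun k => ?_)
    · show Sum.elim _ _ (b.onState ((pathExt w w').onState j)) = a.onState j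
      rw [← hS j]
      rcases hstate j with h | ⟨i, h⟩ <;> rw [h] <;> rfl
    · show (c, b.onAct ((pathExt w w').onAct k)) = a.onAct k
      rw [← hA k]
      have := hact k
      ext
      · simpa using this.symm
      · rfl
  · refine WTSHom.ext' (funext fun j => ?_) (funext fun k => ?_)
    · show (codiag x y).onState (Sum.elim _ _ (b.onState j)) = b.onState j
      rcases hbj : b.onState j with u | i
      · cases u; rfl
      · rfl
    · rfl
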